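/- arXiv:1005.0911 — 5 statements merged into one kernel-verified Lean document; each statement's English description precedes it below -/
import Mathlib

section
/- Fix r ∈ (0,1) and let m ≥ 0 with m ≤ c_v·e^{-1-c₊·r}. If m = c_v·e^{-1-c₊·r}, then s₋(r) = e^{-1-c₊·r} is the unique s ∈ (0,∞) with λ(r,s) = -m. If 0 < m < c_v·e^{-1-c₊·r}, then the equation λ(r,s) = -m has exactly two solutions s ∈ (0,∞), one lying in the open interval (0, s₋(r)) and the other lying in the open interval (s₋(r), s̄(r)), where s̄(r) = e^{-c₊·r}. If m = 0, then s̄(r) is the unique solution. -/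
/-!
With `a = c₀ r` and `b = c_v`, the function `s ↦ a s + b s log s` has derivative `a + b (log s + 1)`,
which vanishes only at `s₋ = exp (-1 - a/b)`: the function decreases from `0` at `s = 0` to its minimum
`-b s₋` and then increases, crossing `0` again at `s̄ = exp (-a/b)`. Each level in `(-b s₋, 0)` is
therefore hit once on each side of `s₋`, the level `-b s₋` only at `s₋`, and the level `0` on `(0, ∞)`
only at `s̄`.
-/

open Real Set

noncomputable def lambdaFn (a b s : ℝ) : ℝ := a * s + b * s * log s

namespace lambdaFn

variable {a b : ℝ}

theorem eq_add_mul_mul_log : lambdaFn a b = fun s => a * s + b * (s * log s) := by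
  funext s; simp only [lambdaFn]; ring

theorem hasDerivAt {x : ℝ} (hx : x ≠ 0) :
    HasDerivAt (lambdaFn a b) (a + b * (log x + 1)) x := by
  rw [eq_add_mul_mul_log]
  exact (((hasDerivAt_id' x).const_mul a).add ((hasDerivAt_mul_log hx).const_mul b)).congr_deriv
    (by ring)

theorem continuous : Continuous (lambdaFn a b) := by
  rw [eq_add_mul_mul_log]
  exact (continuous_const.mul continuous_id).add (continuous_const.mul continuous_mul_log)

@[simp]
theorem apply_zero : lambdaFn a b 0 = 0 := by simp [lambdaFn]

theorem apply_exp (t : ℝ) : lambdaFn a b (exp t) = (a + b * t) * exp t := by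
  simp only [lambdaFn, log_exp]; ring

theorem apply_exp_critical (hb : b ≠ 0) :
    lambdaFn a b (exp (-1 - a / b)) = -(b * exp (-1 - a / b)) := by
  rw [apply_exp]; field_simp; ring

theorem apply_exp_neg_div (hb : b ≠ 0) : lambdaFn a b (exp (-(a / b))) = 0 := by
  rw [apply_exp]; field_simp; ring

theorem strictAntiOn (hb : 0 < b) : StrictAntiOn (lambdaFn a b) (Icc 0 (exp (-1 - a / b))) := by
  refine strictAntiOn_of_deriv_neg (convex_Icc _ _) continuous.continuousOn fun x hx => ?_
  rw [interior_Icc] at hx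
  rw [(hasDerivAt hx.1.ne').deriv]
  have hlog : log x + 1 < -(a / b) := by linarith [(log_lt_iff_lt_exp hx.1).2 hx.2]
  have := mul_lt_mul_of_pos_left hlog hb
  rw [mul_neg, mul_div_cancel₀ a hb.ne'] at this
  linarith

theorem strictMonoOn (hb : 0 < b) : StrictMonoOn (lambdaFn a b) (Ici (exp (-1 - a / b))) := by
  refine strictMonoOn_of_deriv_pos (convex_Ici _) continuous.continuousOn fun x hx => ?_
  rw [interior_Ici] at hx
  have hx0 : 0 < x := (exp_pos _).trans hx
  rw [(hasDerivAt hx0.ne').deriv]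
  have hlog : -(a / b) < log x + 1 := by linarith [(lt_log_iff_exp_lt hx0).2 hx]
  have := mul_lt_mul_of_pos_left hlog hb
  rw [mul_neg, mul_div_cancel₀ a hb.ne'] at this
  linarith

theorem eq_exp_critical_of_apply_eq (hb : 0 < b) {s : ℝ} (hs : 0 ≤ s)
    (h : lambdaFn a b s = -(b * exp (-1 - a / b))) : s = exp (-1 - a / b) := by
  rw [← apply_exp_critical hb.ne'] at h
  rcases lt_trichotomy s (exp (-1 - a / b)) with hlt | heq | hgt
  · exact absurd h (strictAntiOn hb ⟨hs, hlt.le⟩ ⟨(exp_pos _).le, le_rfl⟩ hlt).ne'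
  · exact heq
  · exact absurd h (strictMonoOn hb (mem_Ici.2 le_rfl) hgt.le hgt).ne'

theorem eq_exp_neg_div_of_apply_eq_zero (hb : b ≠ 0) {s : ℝ} (hs : 0 < s)
    (h : lambdaFn a b s = 0) : s = exp (-(a / b)) := by
  have hfactor : s * (a + b * log s) = 0 := by rw [← h, lambdaFn]; ring
  have hlog : log s = -(a / b) := by
    field_simp
    linarith [(mul_eq_zero.1 hfactor).resolve_left hs.ne']
  rw [← hlog, exp_log hs]

theorem exists_two_solutions (hb : 0 < b) {y : ℝ} (hy_min : -(b * exp (-1 - a / b)) < y)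
    (hy_neg : y < 0) :
    ∃ s₁ s₂ : ℝ, s₁ ∈ Ioo 0 (exp (-1 - a / b)) ∧ s₂ ∈ Ioo (exp (-1 - a / b)) (exp (-(a / b))) ∧
      lambdaFn a b s₁ = y ∧ lambdaFn a b s₂ = y ∧
      ∀ s ∈ Ioi (0 : ℝ), lambdaFn a b s = y → s = s₁ ∨ s = s₂ := by
  have hcrit := apply_exp_critical (a := a) hb.ne'
  have hcrit_lt : exp (-1 - a / b) < exp (-(a / b)) := exp_lt_exp.2 (by linarith)
  obtain ⟨s₁, hs₁, hfs₁⟩ := intermediate_value_Ioo' (exp_pos _).le continuous.continuousOn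
    (show y ∈ Ioo (lambdaFn a b (exp (-1 - a / b))) (lambdaFn a b 0) by
      rw [hcrit, apply_zero]; exact ⟨hy_min, hy_neg⟩)
  obtain ⟨s₂, hs₂, hfs₂⟩ := intermediate_value_Ioo hcrit_lt.le continuous.continuousOn
    (show y ∈ Ioo (lambdaFn a b (exp (-1 - a / b))) (lambdaFn a b (exp (-(a / b)))) by
      rw [hcrit, apply_exp_neg_div hb.ne']; exact ⟨hy_min, hy_neg⟩)
  refine ⟨s₁, s₂, hs₁, hs₂, hfs₁, hfs₂, fun s hs hfs => ?_⟩
  rcases lt_trichotomy s (exp (-1 - a / b)) with hlt | heq | hgt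
  · exact .inl ((strictAntiOn hb).injOn ⟨le_of_lt hs, hlt.le⟩ ⟨hs₁.1.le, hs₁.2.le⟩
      (hfs.trans hfs₁.symm))
  · rw [heq, hcrit] at hfs; linarith
  · exact .inr ((strictMonoOn hb).injOn hgt.le hs₂.1.le (hfs.trans hfs₂.symm))

end lambdaFn

theorem stmt6_general (c0 cv : ℝ) (hcv : 0 < cv)
    (r : ℝ) (m : ℝ) :
    (m = cv * Real.exp (-1 - (c0 / cv) * r) →
      (c0 * r * Real.exp (-1 - (c0 / cv) * r)
          + cv * Real.exp (-1 - (c0 / cv) * r) * Real.log (Real.exp (-1 - (c0 / cv) * r))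
          = -m) ∧
      (∀ s ∈ Set.Ioi (0:ℝ), c0 * r * s + cv * s * Real.log s = -m →
          s = Real.exp (-1 - (c0 / cv) * r))) ∧
    (0 < m → m < cv * Real.exp (-1 - (c0 / cv) * r) →
      ∃ s₁ s₂ : ℝ,
        s₁ ∈ Set.Ioo (0:ℝ) (Real.exp (-1 - (c0 / cv) * r)) ∧
        s₂ ∈ Set.Ioo (Real.exp (-1 - (c0 / cv) * r)) (Real.exp (-(c0 / cv) * r)) ∧
        c0 * r * s₁ + cv * s₁ * Real.log s₁ = -m ∧
        c0 * r * s₂ + cv * s₂ * Real.log s₂ = -m ∧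
        ∀ s ∈ Set.Ioi (0:ℝ), c0 * r * s + cv * s * Real.log s = -m →
          s = s₁ ∨ s = s₂) ∧
    (m = 0 →
      (c0 * r * Real.exp (-(c0 / cv) * r)
          + cv * Real.exp (-(c0 / cv) * r) * Real.log (Real.exp (-(c0 / cv) * r)) = -m) ∧
      (∀ s ∈ Set.Ioi (0:ℝ), c0 * r * s + cv * s * Real.log s = -m →
          s = Real.exp (-(c0 / cv) * r))) := by
  simp only [neg_mul, div_mul_eq_mul_div]
  refine ⟨fun hm => ?_, fun hm_pos hm_lt => ?_, fun hm => ?_⟩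
  · subst hm
    exact ⟨lambdaFn.apply_exp_critical hcv.ne',
      fun s hs => lambdaFn.eq_exp_critical_of_apply_eq hcv (le_of_lt hs)⟩
  · exact lambdaFn.exists_two_solutions hcv (by linarith) (by linarith)
  · subst hm
    rw [neg_zero]
    exact ⟨lambdaFn.apply_exp_neg_div hcv.ne',
      fun s hs => lambdaFn.eq_exp_neg_div_of_apply_eq_zero hcv.ne' hs⟩

/-- Solution structure of `λ(r,s) = -m` for `r ∈ (0,1)`, `0 ≤ m ≤ c_v e^{-1-c₊ r}`:
if `m = c_v e^{-1-c₊ r}`, the unique solution is `s₋(r)`; if `0 < m < c_v e^{-1-c₊ r}`,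
there are exactly two solutions, one in `(0, s₋(r))`, the other in `(s₋(r), s̄(r))`;
if `m = 0`, the unique solution is `s̄(r)`. -/
theorem stmt6 (c0 cv : ℝ) (hc0 : 0 < c0) (hcv : 0 < cv)
    (r : ℝ) (hr : r ∈ Set.Ioo (0:ℝ) 1) (m : ℝ) (hm : 0 ≤ m)
    (hm' : m ≤ cv * Real.exp (-1 - (c0 / cv) * r)) :
    (m = cv * Real.exp (-1 - (c0 / cv) * r) →
      (c0 * r * Real.exp (-1 - (c0 / cv) * r)
          + cv * Real.exp (-1 - (c0 / cv) * r) * Real.log (Real.exp (-1 - (c0 / cv) * r))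
          = -m) ∧
      (∀ s ∈ Set.Ioi (0:ℝ), c0 * r * s + cv * s * Real.log s = -m →
          s = Real.exp (-1 - (c0 / cv) * r))) ∧
    (0 < m → m < cv * Real.exp (-1 - (c0 / cv) * r) →
      ∃ s₁ s₂ : ℝ,
        s₁ ∈ Set.Ioo (0:ℝ) (Real.exp (-1 - (c0 / cv) * r)) ∧
        s₂ ∈ Set.Ioo (Real.exp (-1 - (c0 / cv) * r)) (Real.exp (-(c0 / cv) * r)) ∧
        c0 * r * s₁ + cv * s₁ * Real.log s₁ = -m ∧
        c0 * r * s₂ + cv * s₂ * Real.log s₂ = -m ∧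
        ∀ s ∈ Set.Ioi (0:ℝ), c0 * r * s + cv * s * Real.log s = -m →
          s = s₁ ∨ s = s₂) ∧
    (m = 0 →
      (c0 * r * Real.exp (-(c0 / cv) * r)
          + cv * Real.exp (-(c0 / cv) * r) * Real.log (Real.exp (-(c0 / cv) * r)) = -m) ∧
      (∀ s ∈ Set.Ioi (0:ℝ), c0 * r * s + cv * s * Real.log s = -m →
          s = Real.exp (-(c0 / cv) * r))) :=
  stmt6_general c0 cv hcv r m
end

section
/- Let δ > 0. Suppose r₁, r₂ ∈ (0,1), s₁, s₂ ∈ (0,1], and m₁, m₂ ≥ 0 satisfy λ(r₁,s₁) = -m₁ and λ(r₂,s₂) = -m₂, and suppose that for every r in the closed interval with endpoints r₁, r₂ and every s in the closed interval with endpoints s₁, s₂ one has s ≥ s₋(r) + δ, where s₋(r) = e^{-1-c₊·r}. Then c_v·log(1+δ)·|s₁ - s₂| ≤ |m₁ - m₂| + c₀·|r₁ - r₂|. -/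
/-- Lipschitz-type estimate: if `λ(r₁,s₁) = -m₁`, `λ(r₂,s₂) = -m₂` with
`s ≥ s₋(r) + δ` on the relevant rectangle, then
`c_v log(1+δ) |s₁ - s₂| ≤ |m₁ - m₂| + c₀ |r₁ - r₂|`. -/
theorem stmt9 (c0 cv : ℝ) (hc0 : 0 < c0) (hcv : 0 < cv) (δ : ℝ) (hδ : 0 < δ)
    (r₁ r₂ s₁ s₂ m₁ m₂ : ℝ)
    (hr₁ : r₁ ∈ Set.Ioo (0:ℝ) 1) (hr₂ : r₂ ∈ Set.Ioo (0:ℝ) 1)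
    (hs₁ : s₁ ∈ Set.Ioc (0:ℝ) 1) (hs₂ : s₂ ∈ Set.Ioc (0:ℝ) 1)
    (hm₁ : 0 ≤ m₁) (hm₂ : 0 ≤ m₂)
    (heq₁ : c0 * r₁ * s₁ + cv * s₁ * Real.log s₁ = -m₁)
    (heq₂ : c0 * r₂ * s₂ + cv * s₂ * Real.log s₂ = -m₂)
    (hδ' : ∀ r ∈ Set.uIcc r₁ r₂, ∀ s ∈ Set.uIcc s₁ s₂,
        s ≥ Real.exp (-1 - (c0 / cv) * r) + δ) :
    cv * Real.log (1 + δ) * |s₁ - s₂| ≤ |m₁ - m₂| + c0 * |r₁ - r₂| := by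
  set K : ℝ := cv * Real.log (1 + δ) with hK
  have hr1mem : r₁ ∈ Set.uIcc r₁ r₂ := Set.left_mem_uIcc
  -- positivity on the interval
  have hpos : ∀ s ∈ Set.uIcc s₁ s₂, 0 < s := by
    intro s hs
    have := hδ' r₁ hr1mem s hs
    have h1 := Real.exp_pos (-1 - (c0 / cv) * r₁)
    linarith
  -- derivative lower bound : log(1+δ) ≤ c0/cv * r₁ + log s + 1 on the interval
  have hlog : ∀ s ∈ Set.uIcc s₁ s₂, Real.log (1 + δ) ≤ c0 / cv * r₁ + Real.log s + 1 := by
    intro s hs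
    have hsl := hδ' r₁ hr1mem s hs
    set t : ℝ := -1 - (c0 / cv) * r₁ with ht
    have htneg : t < 0 := by
      have : 0 < c0 / cv * r₁ := mul_pos (div_pos hc0 hcv) hr₁.1
      simp only [ht]; linarith
    have hexp1 : Real.exp t ≤ 1 := by
      have := Real.exp_lt_one_iff.mpr htneg; linarith
    have key : (1 + δ) * Real.exp t ≤ s := by
      have : δ * Real.exp t ≤ δ := by nlinarith [Real.exp_pos t]
      nlinarith [Real.exp_pos t]
    have h1δ : (0:ℝ) < 1 + δ := by linarith
    have hlogle : Real.log ((1 + δ) * Real.exp t) ≤ Real.log s :=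
      Real.log_le_log (by positivity) key
    rw [Real.log_mul (ne_of_gt h1δ) (Real.exp_ne_zero t), Real.log_exp] at hlogle
    simp only [ht] at hlogle
    linarith
  -- the auxiliary function
  set g : ℝ → ℝ := fun s => c0 * r₁ * s + cv * (s * Real.log s) - K * s with hg
  have hderiv : ∀ x : ℝ, 0 < x →
      HasDerivAt g (c0 * r₁ + cv * (Real.log x + 1) - K) x := by
    intro x hx
    have h1 : HasDerivAt (fun s : ℝ => c0 * r₁ * s) (c0 * r₁) x := by
      simpa using (hasDerivAt_id x).const_mul (c0 * r₁)
    have h2 : HasDerivAt (fun s : ℝ => cv * (s * Real.log s)) (cv * (Real.log x + 1)) x :=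
      (Real.hasDerivAt_mul_log hx.ne').const_mul cv
    have h3 : HasDerivAt (fun s : ℝ => K * s) K x := by
      simpa using (hasDerivAt_id x).const_mul K
    exact (h1.add h2).sub h3
  -- monotonicity of g on the interval
  have hmono : MonotoneOn g (Set.uIcc s₁ s₂) := by
    apply monotoneOn_of_deriv_nonneg (convex_uIcc s₁ s₂)
    · -- continuity
      apply ContinuousOn.sub
      apply ContinuousOn.add
      · exact (continuous_const.mul continuous_id).continuousOn
      · apply ContinuousOn.mul continuousOn_const
        apply ContinuousOn.mul continuousOn_id
        exact Real.continuousOn_log.mono (fun x hx => by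
          simpa using (hpos x hx).ne')
      · exact (continuous_const.mul continuous_id).continuousOn
    · intro x hx
      have hx' : x ∈ Set.uIcc s₁ s₂ := interior_subset hx
      exact ((hderiv x (hpos x hx')).differentiableAt).differentiableWithinAt
    · intro x hx
      have hx' : x ∈ Set.uIcc s₁ s₂ := interior_subset hx
      have hxpos := hpos x hx'
      rw [(hderiv x hxpos).deriv]
      have := hlog x hx'
      have h2 : cv * Real.log (1 + δ) ≤ cv * (c0 / cv * r₁ + Real.log x + 1) :=
        mul_le_mul_of_nonneg_left this hcv.le
      have h3 : cv * (c0 / cv * r₁) = c0 * r₁ := by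
        field_simp
      nlinarith
  -- key estimate : K * |s₁ - s₂| ≤ |λ(r₁,s₁) - λ(r₁,s₂)|
  have hkey : K * |s₁ - s₂| ≤
      |(c0 * r₁ * s₁ + cv * (s₁ * Real.log s₁)) - (c0 * r₁ * s₂ + cv * (s₂ * Real.log s₂))| := by
    rcases le_total s₁ s₂ with h | h
    · have hmem1 : s₁ ∈ Set.uIcc s₁ s₂ := Set.left_mem_uIcc
      have hmem2 : s₂ ∈ Set.uIcc s₁ s₂ := Set.right_mem_uIcc
      have := hmono hmem1 hmem2 h
      simp only [hg] at this
      have habs : |s₁ - s₂| = s₂ - s₁ := by rw [abs_sub_comm]; exact abs_of_nonneg (by linarith)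
      rw [habs]
      calc K * (s₂ - s₁) ≤ (c0 * r₁ * s₂ + cv * (s₂ * Real.log s₂))
            - (c0 * r₁ * s₁ + cv * (s₁ * Real.log s₁)) := by linarith
        _ ≤ _ := by rw [abs_sub_comm]; exact le_abs_self _
    · have hmem1 : s₁ ∈ Set.uIcc s₁ s₂ := Set.left_mem_uIcc
      have hmem2 : s₂ ∈ Set.uIcc s₁ s₂ := Set.right_mem_uIcc
      have := hmono hmem2 hmem1 h
      simp only [hg] at this
      have habs : |s₁ - s₂| = s₁ - s₂ := abs_of_nonneg (by linarith)
      rw [habs]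
      calc K * (s₁ - s₂) ≤ (c0 * r₁ * s₁ + cv * (s₁ * Real.log s₁))
            - (c0 * r₁ * s₂ + cv * (s₂ * Real.log s₂)) := by linarith
        _ ≤ _ := le_abs_self _
  -- now rewrite using the equations
  have hid : (c0 * r₁ * s₁ + cv * (s₁ * Real.log s₁)) - (c0 * r₁ * s₂ + cv * (s₂ * Real.log s₂))
      = (-m₁ - (-m₂)) - c0 * s₂ * (r₁ - r₂) := by
    have e1 : c0 * r₁ * s₁ + cv * (s₁ * Real.log s₁) = -m₁ := by ring_nf; ring_nf at heq₁; linarith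
    have e2 : c0 * r₂ * s₂ + cv * (s₂ * Real.log s₂) = -m₂ := by ring_nf; ring_nf at heq₂; linarith
    have : c0 * r₁ * s₂ + cv * (s₂ * Real.log s₂)
        = -m₂ + c0 * s₂ * (r₁ - r₂) := by linarith [e2]; 
    rw [e1, this]; ring
  rw [hid] at hkey
  have htri : |(-m₁ - (-m₂)) - c0 * s₂ * (r₁ - r₂)| ≤ |m₁ - m₂| + c0 * |r₁ - r₂| := by
    have h1 : |(-m₁ - (-m₂)) - c0 * s₂ * (r₁ - r₂)| ≤ |(-m₁ - (-m₂))| + |c0 * s₂ * (r₁ - r₂)| :=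
      abs_sub _ _
    have h2 : |(-m₁ - (-m₂))| = |m₁ - m₂| := by rw [abs_sub_comm]; congr 1; ring
    have h3 : |c0 * s₂ * (r₁ - r₂)| = c0 * s₂ * |r₁ - r₂| := by
      rw [abs_mul, abs_of_nonneg (by nlinarith [hs₂.1] : (0:ℝ) ≤ c0 * s₂)]
    have h4 : c0 * s₂ * |r₁ - r₂| ≤ c0 * |r₁ - r₂| := by
      have h5 := hs₂.2
      nlinarith [mul_nonneg (mul_nonneg hc0.le (sub_nonneg.mpr h5)) (abs_nonneg (r₁ - r₂))]
    calc |(-m₁ - (-m₂)) - c0 * s₂ * (r₁ - r₂)| ≤ |m₁ - m₂| + |c0 * s₂ * (r₁ - r₂)| := by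
          rw [← h2]; exact h1
      _ ≤ |m₁ - m₂| + c0 * |r₁ - r₂| := by rw [h3]; linarith
  linarith
end

section
/- Let D = {(r,m) : r ∈ (0,1), 0 ≤ m < c_v·e^{-1-c₊·r}} and for (r,m) ∈ D let Θ(r,m) denote the unique s in the half-open interval (s₋(r), s̄(r)] with λ(r,s) = -m, where s₋(r) = e^{-1-c₊·r} and s̄(r) = e^{-c₊·r}. Then the map Θ : D → ℝ is continuous. -/
/-!
For fixed `r`, `s ↦ λ(r,s)` is strictly increasing on `[s₋(r), ∞)`, its derivative
`c₀ r + c_v (log s + 1)` being positive there. A zero of a strictly increasing function that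
depends continuously on a parameter moves continuously: if `λ(r,A) + m < 0 < λ(r,B) + m` at
one parameter, the same inequalities hold nearby, and they trap `Θ` in `(A, B)`.
-/

open Filter Set Real

theorem strictMonoOn_mul_add_mul_mul_log {α β : ℝ} (hβ : 0 < β) :
    StrictMonoOn (fun s => α * s + β * s * log s) (Ici (exp (-1 - α / β))) := by
  simp only [mul_assoc β]
  refine strictMonoOn_of_deriv_pos (convex_Ici _)
    (continuous_const_mul α |>.add (continuous_mul_log.const_mul β)).continuousOn fun s hs => ?_
  rw [interior_Ici] at hs
  have hs₀ : 0 < s := (exp_pos _).trans hs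
  have hderiv : HasDerivAt (fun s => α * s + β * (s * log s)) (α + β * (log s + 1)) s := by
    simpa only [mul_one] using
      ((hasDerivAt_id' s).const_mul α).fun_add ((hasDerivAt_mul_log hs₀.ne').const_mul β)
  have hlog : -1 - α / β < log s := (lt_log_iff_exp_lt hs₀).2 hs
  rw [hderiv.deriv]
  have : α = β * (α / β) := by field_simp
  nlinarith

theorem continuousOn_of_strictMonoOn_of_apply_eq_zero {X : Type*} [TopologicalSpace X]
    {D : Set X} {f : X → ℝ → ℝ} {lo θ : X → ℝ}
    (hf : ∀ t, Continuous fun x => f x t) (hlo : Continuous lo)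
    (hmono : ∀ x ∈ D, StrictMonoOn (f x) (Ioi (lo x)))
    (hθ : ∀ x ∈ D, lo x < θ x ∧ f x (θ x) = 0) :
    ContinuousOn θ D := by
  intro x₀ hx₀
  obtain ⟨hlo₀, hzero₀⟩ := hθ x₀ hx₀
  refine tendsto_order.2 ⟨fun a ha => ?_, fun b hb => ?_⟩
  · obtain ⟨A, hA, hAθ⟩ := exists_between (max_lt ha hlo₀)
    obtain ⟨haA, hloA⟩ := max_lt_iff.1 hA
    have hfA : f x₀ A < 0 := hzero₀ ▸ hmono x₀ hx₀ hloA hlo₀ hAθ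
    filter_upwards [self_mem_nhdsWithin,
      nhdsWithin_le_nhds ((hf A).continuousAt.eventually_lt_const hfA),
      nhdsWithin_le_nhds (hlo.continuousAt.eventually_lt_const hloA)]
      with x hxD hfx hlox
    obtain ⟨hloθ, hzero⟩ := hθ x hxD
    exact haA.trans (((hmono x hxD).lt_iff_lt hlox hloθ).1 (hzero ▸ hfx))
  · have hfb : 0 < f x₀ b := hzero₀ ▸ hmono x₀ hx₀ hlo₀ (hlo₀.trans hb) hb
    filter_upwards [self_mem_nhdsWithin,
      nhdsWithin_le_nhds ((hf b).continuousAt.eventually_const_lt hfb),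
      nhdsWithin_le_nhds (hlo.continuousAt.eventually_lt_const (hlo₀.trans hb))]
      with x hxD hfx hlox
    obtain ⟨hloθ, hzero⟩ := hθ x hxD
    exact ((hmono x hxD).lt_iff_lt hloθ hlox).1 (hzero ▸ hfx)

theorem stmt10_general (c0 cv : ℝ) (hcv : 0 < cv)
    (Θ : ℝ → ℝ → ℝ)
    (hΘ : ∀ r m : ℝ, r ∈ Set.Ioo (0:ℝ) 1 → 0 ≤ m →
        m < cv * Real.exp (-1 - (c0 / cv) * r) →
        Θ r m ∈ Set.Ioc (Real.exp (-1 - (c0 / cv) * r)) (Real.exp (-(c0 / cv) * r)) ∧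
        c0 * r * Θ r m + cv * Θ r m * Real.log (Θ r m) = -m) :
    ContinuousOn (fun p : ℝ × ℝ => Θ p.1 p.2)
      {p : ℝ × ℝ | p.1 ∈ Set.Ioo (0:ℝ) 1 ∧ 0 ≤ p.2 ∧
        p.2 < cv * Real.exp (-1 - (c0 / cv) * p.1)} := by
  refine continuousOn_of_strictMonoOn_of_apply_eq_zero
    (f := fun p s => c0 * p.1 * s + cv * s * log s + p.2)
    (lo := fun p => exp (-1 - (c0 / cv) * p.1)) (fun s => by fun_prop) (by fun_prop)
    (fun p _ => ?_) (fun p ⟨hr, hm₀, hm⟩ => ?_)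
  · have hmono := (strictMonoOn_mul_add_mul_mul_log (α := c0 * p.1) hcv).mono Ioi_subset_Ici_self
    rw [mul_div_right_comm] at hmono
    exact fun s hs t ht hst => by simpa only [add_lt_add_iff_right] using hmono hs ht hst
  · obtain ⟨hmem, heq⟩ := hΘ p.1 p.2 hr hm₀ hm
    exact ⟨hmem.1, by simp only [heq, neg_add_cancel]⟩

/-- On `D = {(r,m) : r ∈ (0,1), 0 ≤ m < c_v e^{-1-c₊ r}}`, the map `Θ` sending `(r,m)`
to the unique `s ∈ (s₋(r), s̄(r)]` with `λ(r,s) = -m` is continuous. -/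
theorem stmt10 (c0 cv : ℝ) (hc0 : 0 < c0) (hcv : 0 < cv)
    (Θ : ℝ → ℝ → ℝ)
    (hΘ : ∀ r m : ℝ, r ∈ Set.Ioo (0:ℝ) 1 → 0 ≤ m →
        m < cv * Real.exp (-1 - (c0 / cv) * r) →
        Θ r m ∈ Set.Ioc (Real.exp (-1 - (c0 / cv) * r)) (Real.exp (-(c0 / cv) * r)) ∧
        c0 * r * Θ r m + cv * Θ r m * Real.log (Θ r m) = -m) :
    ContinuousOn (fun p : ℝ × ℝ => Θ p.1 p.2)
      {p : ℝ × ℝ | p.1 ∈ Set.Ioo (0:ℝ) 1 ∧ 0 ≤ p.2 ∧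
        p.2 < cv * Real.exp (-1 - (c0 / cv) * p.1)} :=
  stmt10_general c0 cv hcv Θ hΘ
end

section
/- Let T > 0, let a : [0,T] → ℝ be continuous, and let ξ₀ ≥ 0. Define ξ : [0,T] → ℝ by ξ(t) = (max(√ξ₀ - (1/2)∫₀ᵗ a(τ)dτ, 0))². Then ξ is differentiable on [0,T], ξ(t) ≥ 0 for all t, ξ(0) = ξ₀, and ξ'(t) + a(t)·√(ξ(t)) = 0 for all t ∈ [0,T]. -/
/-!
Write `w t = √ξ₀ - ½ ∫₀ᵗ a`, so that `ξ = (max w 0)²`. The map `u ↦ (max u 0)²` is differentiable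
everywhere with derivative `2 max u 0`, also at the kink `u = 0`, where it is `O(u²)`. The chain rule
and the fundamental theorem of calculus give `ξ' = 2 max w 0 · (-a/2) = -a √ξ`, because
`√((max w 0)²) = max w 0`.
-/

open Asymptotics Filter Set Topology

lemma hasDerivAt_sq_max_zero (x : ℝ) :
    HasDerivAt (fun y : ℝ => max y 0 ^ 2) (2 * max x 0) x := by
  rcases lt_trichotomy x 0 with hx | rfl | hx
  · have hloc : (fun y : ℝ => max y 0 ^ 2) =ᶠ[𝓝 x] fun _ => 0 := by
      filter_upwards [Iio_mem_nhds hx] with y (hy : y < 0)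
      simp [max_eq_right hy.le]
    simpa [max_eq_right hx.le] using (hasDerivAt_const x (0 : ℝ)).congr_of_eventuallyEq hloc
  · have hbound : (fun y : ℝ => max y 0 ^ 2) =O[𝓝 0] fun y => y ^ 2 := by
      refine IsBigO.of_bound 1 (Eventually.of_forall fun y => ?_)
      rcases le_total y 0 with hy | hy <;> simp [hy, sq_nonneg]
    rw [hasDerivAt_iff_isLittleO]
    simpa using hbound.trans_isLittleO (isLittleO_pow_id one_lt_two)
  · have hloc : (fun y : ℝ => max y 0 ^ 2) =ᶠ[𝓝 x] fun y => y ^ 2 := by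
      filter_upwards [Ioi_mem_nhds hx] with y (hy : 0 < y)
      simp [max_eq_left hy.le]
    simpa [max_eq_left hx.le] using (hasDerivAt_pow 2 x).congr_of_eventuallyEq hloc

lemma HasDerivWithinAt.sq_max_zero {g : ℝ → ℝ} {g' t : ℝ} {s : Set ℝ}
    (hg : HasDerivWithinAt g g' s t) :
    HasDerivWithinAt (fun u => max (g u) 0 ^ 2) (2 * max (g t) 0 * g') s t :=
  (hasDerivAt_sq_max_zero (g t)).comp_hasDerivWithinAt t hg

lemma ContinuousOn.hasDerivWithinAt_integral_Icc {E : Type*} [NormedAddCommGroup E]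
    [NormedSpace ℝ E] [CompleteSpace E] {f : ℝ → E} {b c t : ℝ}
    (hf : ContinuousOn f (Icc b c)) (ht : t ∈ Icc b c) :
    HasDerivWithinAt (fun u => ∫ τ in b..u, f τ) (f t) (Icc b c) t := by
  have : Fact (t ∈ Icc b c) := ⟨ht⟩
  have hint : IntervalIntegrable f MeasureTheory.volume b t := by
    refine (hf.mono ?_).intervalIntegrable
    rw [uIcc_of_le ht.1]
    exact Icc_subset_Icc le_rfl ht.2
  exact intervalIntegral.integral_hasDerivWithinAt_right hint
    (hf.stronglyMeasurableAtFilter_nhdsWithin measurableSet_Icc t) (hf t ht)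

theorem stmt12_general (T : ℝ) (a : ℝ → ℝ)
    (ha : ContinuousOn a (Set.Icc 0 T)) (ξ0 : ℝ) (hξ0 : 0 ≤ ξ0) :
    (∀ t ∈ Set.Icc (0:ℝ) T,
        0 ≤ (max (Real.sqrt ξ0 - (1/2) * ∫ τ in (0:ℝ)..t, a τ) 0)^2) ∧
    (max (Real.sqrt ξ0 - (1/2) * ∫ τ in (0:ℝ)..(0:ℝ), a τ) 0)^2 = ξ0 ∧
    (∀ t ∈ Set.Icc (0:ℝ) T,
        HasDerivWithinAt
          (fun t => (max (Real.sqrt ξ0 - (1/2) * ∫ τ in (0:ℝ)..t, a τ) 0)^2)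
          (-(a t * Real.sqrt ((max (Real.sqrt ξ0 - (1/2) * ∫ τ in (0:ℝ)..t, a τ) 0)^2)))
          (Set.Icc 0 T) t) := by
  refine ⟨fun t _ => sq_nonneg _, by simp [Real.sq_sqrt hξ0], fun t ht => ?_⟩
  have hw : HasDerivWithinAt (fun u => √ξ0 - 1 / 2 * ∫ τ in (0:ℝ)..u, a τ) (-(1 / 2 * a t))
      (Icc 0 T) t :=
    ((ha.hasDerivWithinAt_integral_Icc ht).const_mul (1 / 2)).const_sub √ξ0
  rw [Real.sqrt_sq (le_max_right _ _)]
  convert hw.sq_max_zero using 1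
  ring

/-- The explicit formula `ξ(t) = (max(√ξ₀ - ½∫₀ᵗ a, 0))²` solves the Cauchy problem
`ξ' + a √ξ = 0`, `ξ(0) = ξ₀`, and is nonnegative and differentiable on `[0,T]`. -/
theorem stmt12 (T : ℝ) (hT : 0 < T) (a : ℝ → ℝ)
    (ha : ContinuousOn a (Set.Icc 0 T)) (ξ0 : ℝ) (hξ0 : 0 ≤ ξ0) :
    (∀ t ∈ Set.Icc (0:ℝ) T,
        0 ≤ (max (Real.sqrt ξ0 - (1/2) * ∫ τ in (0:ℝ)..t, a τ) 0)^2) ∧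
    (max (Real.sqrt ξ0 - (1/2) * ∫ τ in (0:ℝ)..(0:ℝ), a τ) 0)^2 = ξ0 ∧
    (∀ t ∈ Set.Icc (0:ℝ) T,
        HasDerivWithinAt
          (fun t => (max (Real.sqrt ξ0 - (1/2) * ∫ τ in (0:ℝ)..t, a τ) 0)^2)
          (-(a t * Real.sqrt ((max (Real.sqrt ξ0 - (1/2) * ∫ τ in (0:ℝ)..t, a τ) 0)^2)))
          (Set.Icc 0 T) t) :=
  stmt12_general T a ha ξ0 hξ0
end

section
/- Let T > 0, let a : [0,T] → ℝ be continuous with a(t) ≥ 0 for all t, and let ξ₀ ≥ 0. Define ξ : [0,T] → ℝ by ξ(t) = (max(√ξ₀ - (1/2)∫₀ᵗ a(τ)dτ, 0))². Then for every differentiable function η : [0,T] → [0,∞) satisfying η(0) = ξ₀ and η'(t) + a(t)·√(η(t)) = 0 for all t ∈ [0,T], one has η(t) ≤ ξ(t) for all t ∈ [0,T]; that is, ξ is the maximal solution of the Cauchy problem. -/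
/-- Maximality: if `a ≥ 0` on `[0,T]`, the explicit solution
`ξ(t) = (max(√ξ₀ - ½∫₀ᵗ a, 0))²` dominates every nonnegative solution `η` of the
Cauchy problem `η' + a √η = 0`, `η(0) = ξ₀`, on `[0,T]`. -/
theorem stmt13 (T : ℝ) (hT : 0 < T) (a : ℝ → ℝ)
    (ha : ContinuousOn a (Set.Icc 0 T)) (hann : ∀ t ∈ Set.Icc (0:ℝ) T, 0 ≤ a t)
    (ξ0 : ℝ) (hξ0 : 0 ≤ ξ0)
    (η η' : ℝ → ℝ)
    (hη : ∀ t ∈ Set.Icc (0:ℝ) T, HasDerivWithinAt η (η' t) (Set.Icc 0 T) t)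
    (hηnn : ∀ t ∈ Set.Icc (0:ℝ) T, 0 ≤ η t)
    (hη0 : η 0 = ξ0)
    (hode : ∀ t ∈ Set.Icc (0:ℝ) T, η' t + a t * Real.sqrt (η t) = 0) :
    ∀ t ∈ Set.Icc (0:ℝ) T,
      η t ≤ (max (Real.sqrt ξ0 - (1/2) * ∫ τ in (0:ℝ)..t, a τ) 0)^2 := by
  -- extend `a` continuously to all of ℝ
  set A : ℝ → ℝ := Set.IccExtend hT.le (fun x : Set.Icc (0:ℝ) T => a x) with hA
  have hAc : Continuous A :=
    Continuous.Icc_extend' (continuousOn_iff_continuous_restrict.mp ha)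
  have hAeq : ∀ x ∈ Set.Icc (0:ℝ) T, A x = a x := by
    intro x hx
    simp [hA, Set.IccExtend_of_mem hT.le _ hx]
  -- η is antitone
  have hηanti : AntitoneOn η (Set.Icc 0 T) := by
    refine antitoneOn_of_hasDerivWithinAt_nonpos (f' := η') (convex_Icc 0 T)
      (fun x hx => (hη x hx).continuousWithinAt) ?_ ?_
    · intro x hx
      exact (hη x (interior_subset hx)).mono interior_subset
    · intro x hx
      have hx' := interior_subset hx
      have h1 := hode x hx'
      nlinarith [hann x hx', Real.sqrt_nonneg (η x)]
  intro t ht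
  obtain ⟨ht0, htT⟩ := ht
  have htmem : t ∈ Set.Icc (0:ℝ) T := ⟨ht0, htT⟩
  have hIcc : Set.Icc (0:ℝ) t ⊆ Set.Icc 0 T := Set.Icc_subset_Icc le_rfl htT
  rcases le_or_gt (η t) 0 with h0 | hpos
  · calc η t ≤ 0 := h0
      _ ≤ _ := by positivity
  · -- η is positive on [0, t]
    have hηpos : ∀ x ∈ Set.Icc (0:ℝ) t, 0 < η x := by
      intro x hx
      exact lt_of_lt_of_le hpos (hηanti (hIcc hx) htmem hx.2)
    -- the function g x = √(η x) + ½ ∫₀ˣ A has zero derivative on [0,t]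
    set g : ℝ → ℝ := fun x => Real.sqrt (η x) + (1/2) * ∫ τ in (0:ℝ)..x, A τ with hg
    have hgd : ∀ x ∈ Set.Icc (0:ℝ) t, HasDerivWithinAt g 0 (Set.Icc 0 t) x := by
      intro x hx
      have hxT : x ∈ Set.Icc (0:ℝ) T := hIcc hx
      have hηx : 0 < η x := hηpos x hx
      have hsx : 0 < Real.sqrt (η x) := Real.sqrt_pos.mpr hηx
      have hd1 : HasDerivWithinAt η (η' x) (Set.Icc 0 t) x := (hη x hxT).mono hIcc
      have hsq :
          HasDerivWithinAt (fun y => Real.sqrt (η y))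
            (1 / (2 * Real.sqrt (η x)) * η' x) (Set.Icc 0 t) x :=
        (Real.hasDerivAt_sqrt hηx.ne').comp_hasDerivWithinAt x hd1
      have hF : HasDerivWithinAt (fun y => (1/2) * ∫ τ in (0:ℝ)..y, A τ)
          ((1/2) * A x) (Set.Icc 0 t) x :=
        (((hAc.integral_hasStrictDerivAt 0 x).hasDerivAt).hasDerivWithinAt).const_mul (1/2)
      have hsum := hsq.add hF
      have hode' : η' x = -(a x * Real.sqrt (η x)) := by
        have := hode x hxT; linarith
      have hzero : 1 / (2 * Real.sqrt (η x)) * η' x + (1/2) * A x = 0 := by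
        rw [hode', hAeq x hxT]
        field_simp
        ring
      rwa [hzero] at hsum
    -- hence g is constant on [0,t]
    have hconst : g t = g 0 := by
      have := (convex_Icc (0:ℝ) t).norm_image_sub_le_of_norm_hasDerivWithin_le
        (f' := fun _ => (0:ℝ)) (C := 0) hgd (fun x _ => by simp)
        (Set.left_mem_Icc.mpr ht0) (Set.right_mem_Icc.mpr ht0)
      have h0 : ‖g t - g 0‖ ≤ 0 := by simpa using this
      have := norm_nonneg (g t - g 0)
      have : ‖g t - g 0‖ = 0 := le_antisymm h0 this
      have := norm_eq_zero.mp this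
      linarith [sub_eq_zero.mp this]
    have hg0 : g 0 = Real.sqrt ξ0 := by
      simp [hg, hη0]
    -- integrals of A and a over [0,t] agree
    have hint : (∫ τ in (0:ℝ)..t, A τ) = ∫ τ in (0:ℝ)..t, a τ := by
      refine intervalIntegral.integral_congr ?_
      intro x hx
      rw [Set.uIcc_of_le ht0] at hx
      exact hAeq x (hIcc hx)
    have hkey : Real.sqrt (η t) = Real.sqrt ξ0 - (1/2) * ∫ τ in (0:ℝ)..t, a τ := by
      have : Real.sqrt (η t) + (1/2) * ∫ τ in (0:ℝ)..t, A τ = Real.sqrt ξ0 := by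
        rw [← hg0, ← hconst]
      rw [hint] at this
      linarith
    have hle : Real.sqrt (η t) ≤ max (Real.sqrt ξ0 - (1/2) * ∫ τ in (0:ℝ)..t, a τ) 0 := by
      rw [hkey]; exact le_max_left _ _
    calc η t = (Real.sqrt (η t))^2 := (Real.sq_sqrt (hηnn t htmem)).symm
      _ ≤ _ := by
        apply pow_le_pow_left₀ (Real.sqrt_nonneg _) hle
end
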